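/- arXiv:2212.02972 — 2 statements merged into one kernel-verified Lean document; each statement's English description precedes it below -/
import Mathlib

section
/- Let n ≥ 1 be an integer, with h, δ and ν_n as defined. Then one has the internal direct sum decompositions of 𝔽[t]-modules K_∞⟨t⟩ = 𝔽[θ,t]·ν_n ⊕ 𝔪_∞⟨t⟩·ν_n and 𝔪_∞⟨t⟩ = {P·ν_n : P ∈ 𝔽[θ,t], deg_θ P < h} ⊕ 𝔪_∞⟨t⟩·ν_n. -/
/-!
Each factor `1 - t θ^{-q^j}` of `ν_n` is `≡ 1` modulo `𝔪∞⟨t⟩`, so `ν = (-θ)^{-h} s` with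
`s ≡ 1 mod 𝔪∞⟨t⟩`; such an `s` is a unit of `K∞⟨t⟩` of norm `1` with inverse of norm `1`. Thus
`ν` is a unit with `‖ν‖ ≤ q^{-h}` and `‖ν⁻¹‖ ≤ q^h`, and both decompositions come from writing
`f ν⁻¹ = P + g`, where `P ∈ 𝔽[θ,t]` collects the nonnegative powers of `θ` in the
`t`-coefficients and `g ∈ 𝔪∞⟨t⟩`. If `‖f‖ < 1` then `‖f ν⁻¹‖ < q^h`, so `deg_θ P < h`.
Uniqueness is `𝔽[θ,t] ∩ 𝔪∞⟨t⟩ = 0`.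
-/

open scoped Classical ENNReal
open Filter

noncomputable section

namespace Carlitz

variable (F : Type) [Field F] [Fintype F]

/-- `K∞ = 𝔽((1/θ))`, realized as the field of formal Laurent series over `F`;
the Laurent-series variable plays the role of `1/θ`. -/
abbrev Kinf := LaurentSeries F

/-- `θ ∈ K∞`, the inverse of the Laurent-series variable. -/
def theta : Kinf F := HahnSeries.single (-1 : ℤ) (1 : F)

/-- The absolute value `|x| = q ^ (deg_θ x)`, with values in `ℝ≥0∞`. -/
def Kabs {R : Type} [Zero R] (q : ℕ) (x : HahnSeries ℤ R) : ℝ≥0∞ :=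
  if x = 0 then 0 else (q : ℝ≥0∞) ^ (-x.order)

/-- The ambient ring of the Tate algebra: formal power series in `t` over `K∞`. -/
abbrev TS := PowerSeries (Kinf F)

/-- The `i`-th `t`-coefficient. -/
def coeffT (i : ℕ) (f : TS F) : Kinf F := PowerSeries.coeff (R := Kinf F) i f

/-- Membership in the Tate algebra `K∞⟨t⟩`: the coefficients tend to `0`. -/
def IsTate (f : TS F) : Prop :=
  Tendsto (fun i => Kabs (Fintype.card F) (coeffT F i f)) atTop (nhds 0)

/-- The Gauss norm `‖f‖ = sup_i |a_i|`. -/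
def gnorm (f : TS F) : ℝ≥0∞ := ⨆ i, Kabs (Fintype.card F) (coeffT F i f)

/-- The twist `f ↦ f⁽¹⁾`: the coefficientwise `q`-power Frobenius. -/
def twist (f : TS F) : TS F := PowerSeries.mk fun i => coeffT F i f ^ Fintype.card F

/-- The iterated twist `f ↦ f⁽ᵏ⁾`. -/
def twistIter (k : ℕ) (f : TS F) : TS F := (twist F)^[k] f

/-- The variable `t` of the Tate algebra. -/
def tt : TS F := PowerSeries.X

/-- `θ`, viewed as a constant of `K∞⟨t⟩`. -/
def th : TS F := PowerSeries.C (R := Kinf F) (theta F)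

/-- The embedding `𝔽[θ] → K∞` sending the polynomial variable to `θ`. -/
def polyK : Polynomial F →+* Kinf F :=
  Polynomial.eval₂RingHom (HahnSeries.C : F →+* Kinf F) (theta F)

/-- The embedding `𝔽[θ][t] → K∞⟨t⟩`: the outer variable goes to `t`,
the inner variable goes to `θ`. -/
def polyT : Polynomial (Polynomial F) →+* TS F :=
  Polynomial.eval₂RingHom ((PowerSeries.C (R := Kinf F)).comp (polyK F)) PowerSeries.X

/-- The subring `𝔽[θ,t] ⊆ K∞⟨t⟩`. -/
def PolyTT : Set (TS F) := Set.range (polyT F)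

/-- The subset of `𝔽[θ,t]` of elements of `θ`-degree `< n`. -/
def PolyDegLt (n : ℕ) : Set (TS F) :=
  {f | ∃ P : Polynomial (Polynomial F), (∀ i, (P.coeff i).degree < (n : ℕ)) ∧ f = polyT F P}

/-- The action of `𝔽[t]` on `K∞⟨t⟩`: `a • f` is `actT a * f`. -/
def actT : Polynomial F →+* TS F :=
  Polynomial.eval₂RingHom ((PowerSeries.C (R := Kinf F)).comp (HahnSeries.C : F →+* Kinf F))
    PowerSeries.X

/-- Convergence in `K∞⟨t⟩` with respect to the Gauss norm:
`L` is the limit of the sequence `s`. -/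
def TT (s : ℕ → TS F) (L : TS F) : Prop :=
  Tendsto (fun N => gnorm F (L - s N)) atTop (nhds 0)

/-- Convergence in `K∞`: `L` is the limit of the sequence `s`. -/
def KT (q : ℕ) (s : ℕ → Kinf F) (L : Kinf F) : Prop :=
  Tendsto (fun N => Kabs q (L - s N)) atTop (nhds 0)

/-- Partial products defining `ν_n = (−θ)^{−h} ∏_{j≥0} (1 − t·θ^{−qʲ})ⁿ`,
where `n = h(q−1) + δ`. -/
def nuPartial (n h N : ℕ) : TS F :=
  PowerSeries.C (R := Kinf F) ((-theta F)⁻¹ ^ h) *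
    ∏ j ∈ Finset.range N,
      (1 - tt F * PowerSeries.C (R := Kinf F) ((theta F)⁻¹ ^ Fintype.card F ^ j)) ^ n

/-- Partial products defining `ω_n = (−θ)^m ∏_{i≥0} (1 − t·θ^{−qⁱ})^{−n}`,
where `n = m(q−1)`; `ω_n` is the `n`-th power of the Anderson–Thakur function. -/
def omegaPartial (n m N : ℕ) : TS F :=
  PowerSeries.C (R := Kinf F) ((-theta F) ^ m) *
    ∏ i ∈ Finset.range N,
      ((1 - tt F * PowerSeries.C (R := Kinf F) ((theta F)⁻¹ ^ Fintype.card F ^ i)) ^ n)⁻¹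

/-- Partial sums defining `ξ_e = ∑_{k≥0} e⁽ᵏ⁾ ∏_{i=0}^{k} (t−θ^{qⁱ})^{−n}`. -/
def xiPartial (n : ℕ) (e : TS F) (N : ℕ) : TS F :=
  ∑ k ∈ Finset.range N, twistIter F k e *
    (∏ i ∈ Finset.range (k + 1),
      (tt F - PowerSeries.C (R := Kinf F) (theta F ^ Fintype.card F ^ i)) ^ n)⁻¹

/-- Partial sums defining `s_h = h + ∑_{i≥1} h⁽ⁱ⁾ ∏_{j=0}^{i−1} (t−θ^{qʲ})^{−n}`. -/
def sPartial (n : ℕ) (h : TS F) (N : ℕ) : TS F :=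
  ∑ i ∈ Finset.range N, twistIter F i h *
    (∏ j ∈ Finset.range i,
      (tt F - PowerSeries.C (R := Kinf F) (theta F ^ Fintype.card F ^ j)) ^ n)⁻¹

/-- The map `β : f ↦ f − (t−θ)ⁿ f⁽¹⁾`. -/
def beta (n : ℕ) (f : TS F) : TS F := f - (tt F - th F) ^ n * twist F f

/-- The set of integral extension representatives
`X_n = {ξ ∈ K∞⟨t⟩ : (t−θ)ⁿ ξ − ξ⁽¹⁾ ∈ 𝔽[θ,t]}`. -/
def Xset (n : ℕ) : Set (TS F) :=
  {ξ | IsTate F ξ ∧ (tt F - th F) ^ n * ξ - twist F ξ ∈ PolyTT F}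

section DegLE

variable {R : Type*} [Ring R]

/-- `DegLE e x` encodes `deg_θ x ≤ e`, i.e. `|x| ≤ q ^ e`: the Laurent variable is `1/θ`. -/
def DegLE (e : ℤ) (x : LaurentSeries R) : Prop := ((-e : ℤ) : WithTop ℤ) ≤ x.orderTop

theorem degLE_iff_coeff {e : ℤ} {x : LaurentSeries R} :
    DegLE e x ↔ ∀ k : ℤ, k < -e → x.coeff k = 0 := by
  simp only [DegLE, HahnSeries.le_orderTop_iff_forall, WithTop.coe_lt_coe]

theorem DegLE.mono {e e' : ℤ} (h : e ≤ e') {x : LaurentSeries R} (hx : DegLE e x) :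
    DegLE e' x :=
  le_trans (WithTop.coe_le_coe.2 (by omega)) hx

theorem degLE_zero (e : ℤ) : DegLE e (0 : LaurentSeries R) := by
  simp [DegLE]

theorem degLE_one : DegLE 0 (1 : LaurentSeries R) :=
  degLE_iff_coeff.2 fun k hk => by rw [HahnSeries.coeff_one, if_neg (by omega)]

theorem DegLE.add {e : ℤ} {x y : LaurentSeries R} (hx : DegLE e x) (hy : DegLE e y) :
    DegLE e (x + y) :=
  le_trans (le_min hx hy) HahnSeries.min_orderTop_le_orderTop_add

theorem DegLE.neg {e : ℤ} {x : LaurentSeries R} (hx : DegLE e x) : DegLE e (-x) := by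
  rwa [DegLE, HahnSeries.orderTop_neg]

theorem DegLE.sub {e : ℤ} {x y : LaurentSeries R} (hx : DegLE e x) (hy : DegLE e y) :
    DegLE e (x - y) := by
  rw [sub_eq_add_neg]; exact hx.add hy.neg

theorem degLE_sum {e : ℤ} {ι : Type*} {s : Finset ι} {f : ι → LaurentSeries R}
    (h : ∀ i ∈ s, DegLE e (f i)) : DegLE e (∑ i ∈ s, f i) := by
  classical
  induction s using Finset.induction_on with
  | empty => exact degLE_zero e
  | insert a s ha ih =>
    rw [Finset.sum_insert ha]
    exact (h a (Finset.mem_insert_self a s)).add (ih fun i hi => h i (Finset.mem_insert_of_mem hi))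

theorem DegLE.mul {a b : ℤ} {x y : LaurentSeries R} (hx : DegLE a x) (hy : DegLE b y) :
    DegLE (a + b) (x * y) := by
  refine le_trans ?_ HahnSeries.orderTop_add_le_mul
  rw [neg_add, WithTop.coe_add]
  exact add_le_add hx hy

theorem DegLE.pow {e : ℤ} {x : LaurentSeries R} (hx : DegLE e x) (m : ℕ) :
    DegLE (m * e) (x ^ m) := by
  induction m with
  | zero => simpa using degLE_one
  | succ m ih => rw [pow_succ]; exact (ih.mul hx).mono (by push_cast; linarith)

theorem degLE_single (a : ℤ) (r : R) : DegLE (-a) (HahnSeries.single a r : LaurentSeries R) := by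
  rw [DegLE, neg_neg]; exact HahnSeries.orderTop_single_le

theorem exists_degLE (x : LaurentSeries R) : ∃ e : ℤ, 0 ≤ e ∧ DegLE e x := by
  by_cases hx : x = 0
  · exact ⟨0, le_rfl, hx ▸ degLE_zero 0⟩
  · refine ⟨max 0 (-x.order), le_max_left _ _, ?_⟩
    rw [DegLE, ← HahnSeries.order_eq_orderTop_of_ne_zero hx, WithTop.coe_le_coe]
    omega

theorem eq_zero_of_forall_degLE {x : LaurentSeries R} (h : ∀ e : ℤ, DegLE e x) : x = 0 := by
  ext k
  exact degLE_iff_coeff.1 (h (-k - 1)) k (by omega)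

end DegLE

section Kabs

theorem natCast_zpow_le_zpow_iff {q : ℕ} (hq : 1 < q) {a b : ℤ} :
    (q : ℝ≥0∞) ^ a ≤ (q : ℝ≥0∞) ^ b ↔ a ≤ b := by
  have hq0 : (q : NNReal) ≠ 0 := by positivity
  rw [← ENNReal.coe_natCast, ← ENNReal.coe_zpow hq0, ← ENNReal.coe_zpow hq0, ENNReal.coe_le_coe,
    zpow_le_zpow_iff_right₀ (by exact_mod_cast hq)]

theorem exists_natCast_zpow_le {q : ℕ} (hq : 1 < q) {ε : ℝ≥0∞} (hε : 0 < ε) :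
    ∃ e : ℤ, (q : ℝ≥0∞) ^ e ≤ ε := by
  obtain ⟨n, hn⟩ := ENNReal.exists_inv_nat_lt hε.ne'
  refine ⟨-n, le_trans ?_ hn.le⟩
  rw [ENNReal.zpow_neg, zpow_natCast, ENNReal.inv_le_inv]
  exact_mod_cast (Nat.lt_pow_self hq).le

theorem tendsto_zero_iff_forall_zpow {ι : Type*} {l : Filter ι} {q : ℕ} (hq : 1 < q)
    {u : ι → ℝ≥0∞} : Tendsto u l (nhds 0) ↔ ∀ e : ℤ, ∀ᶠ i in l, u i ≤ (q : ℝ≥0∞) ^ e := by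
  rw [ENNReal.tendsto_nhds_zero]
  refine ⟨fun H e => H _ (ENNReal.zpow_pos (by positivity) (by simp) e), fun H ε hε => ?_⟩
  obtain ⟨e, he⟩ := exists_natCast_zpow_le hq hε
  exact (H e).mono fun i hi => hi.trans he

variable {R : Type} [Ring R]

theorem kabs_le_zpow_iff {q : ℕ} (hq : 1 < q) {e : ℤ} {x : LaurentSeries R} :
    Kabs q x ≤ (q : ℝ≥0∞) ^ e ↔ DegLE e x := by
  by_cases hx : x = 0
  · simp [Kabs, hx, degLE_zero]
  · rw [Kabs, if_neg hx, natCast_zpow_le_zpow_iff hq, DegLE,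
      ← HahnSeries.order_eq_orderTop_of_ne_zero hx, WithTop.coe_le_coe]
    omega

theorem kabs_lt_one_iff {q : ℕ} (hq : 1 < q) {x : LaurentSeries R} :
    Kabs q x < 1 ↔ DegLE (-1) x := by
  rw [← kabs_le_zpow_iff hq]
  by_cases hx : x = 0
  · simp [Kabs, hx]
  · rw [Kabs, if_neg hx, ← zpow_zero (q : ℝ≥0∞), lt_iff_not_ge, natCast_zpow_le_zpow_iff hq,
      natCast_zpow_le_zpow_iff hq]
    omega

end Kabs

section Theta

variable {F : Type} [Field F]

theorem theta_inv : (theta F)⁻¹ = HahnSeries.single (1 : ℤ) (1 : F) := by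
  refine inv_eq_of_mul_eq_one_right ?_
  rw [theta, HahnSeries.single_mul_single]
  norm_num [HahnSeries.single_zero_one]

theorem degLE_theta : DegLE 1 (theta F) := by
  simpa [theta] using degLE_single (-1 : ℤ) (1 : F)

theorem degLE_theta_inv : DegLE (-1) (theta F)⁻¹ := by
  rw [theta_inv]; exact degLE_single 1 1

theorem degLE_theta_inv_pow {m : ℕ} (hm : 1 ≤ m) : DegLE (-1) ((theta F)⁻¹ ^ m) :=
  (degLE_theta_inv.pow m).mono (by omega)

theorem degLE_neg_theta_inv_pow (m : ℕ) : DegLE (-m) ((-theta F)⁻¹ ^ m) := by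
  rw [inv_neg]
  exact (degLE_theta_inv.neg.pow m).mono (by omega)

theorem degLE_neg_theta_pow (m : ℕ) : DegLE m ((-theta F) ^ m) :=
  (degLE_theta.neg.pow m).mono (by omega)

theorem theta_pow (e : ℕ) : theta F ^ e = HahnSeries.single (-(e : ℤ)) (1 : F) := by
  rw [theta, HahnSeries.single_pow]
  simp

theorem polyK_apply (Q : Polynomial F) :
    polyK F Q = ∑ e ∈ Q.support, HahnSeries.single (-(e : ℤ)) (Q.coeff e) := by
  rw [polyK, Polynomial.coe_eval₂RingHom, Polynomial.eval₂_eq_sum, Polynomial.sum_def]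
  refine Finset.sum_congr rfl fun e _ => ?_
  rw [theta_pow, HahnSeries.C_apply, HahnSeries.single_mul_single, zero_add, mul_one]

theorem polyK_coeff_neg_natCast (Q : Polynomial F) (k : ℕ) :
    (polyK F Q).coeff (-(k : ℤ)) = Q.coeff k := by
  classical
  rw [polyK_apply, HahnSeries.coeff_sum, Finset.sum_eq_single k]
  · rw [HahnSeries.coeff_single_same]
  · intro e _ hne
    exact HahnSeries.coeff_single_of_ne (by omega)
  · intro hk
    rw [HahnSeries.coeff_single_same, Polynomial.notMem_support_iff.1 hk]

theorem polyK_coeff_of_pos (Q : Polynomial F) {j : ℤ} (hj : 0 < j) : (polyK F Q).coeff j = 0 := by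
  rw [polyK_apply, HahnSeries.coeff_sum]
  exact Finset.sum_eq_zero fun e _ => HahnSeries.coeff_single_of_ne (by omega)

theorem degLE_polyK_of_degree_lt {Q : Polynomial F} {d : ℕ} (hQ : Q.degree < d) :
    DegLE (d - 1) (polyK F Q) := by
  refine degLE_iff_coeff.2 fun k hk => ?_
  rcases le_or_gt k 0 with h0 | h0
  · obtain ⟨m, rfl⟩ : ∃ m : ℕ, k = -m := ⟨(-k).toNat, by omega⟩
    rw [polyK_coeff_neg_natCast]
    exact Polynomial.coeff_eq_zero_of_degree_lt (hQ.trans_le (by exact_mod_cast (by omega : d ≤ m)))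
  · exact polyK_coeff_of_pos Q h0

theorem eq_zero_of_degLE_polyK {Q : Polynomial F} (h : DegLE (-1) (polyK F Q)) : Q = 0 := by
  ext k
  rw [Polynomial.coeff_zero, ← polyK_coeff_neg_natCast]
  exact degLE_iff_coeff.1 h _ (by omega)

/-- The terms `θ^k`, `0 ≤ k < d`, of `x`, as a polynomial in `θ`. -/
def polyPart (d : ℕ) (x : Kinf F) : Polynomial F :=
  ∑ k ∈ Finset.range d, Polynomial.monomial k (x.coeff (-(k : ℤ)))

theorem polyPart_coeff (d : ℕ) (x : Kinf F) (k : ℕ) :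
    (polyPart d x).coeff k = if k < d then x.coeff (-(k : ℤ)) else 0 := by
  simp [polyPart, Polynomial.coeff_monomial]

theorem degree_polyPart_lt (d : ℕ) (x : Kinf F) : (polyPart d x).degree < d := by
  rw [Polynomial.degree_lt_iff_coeff_zero]
  intro m hm
  rw [polyPart_coeff, if_neg (by exact_mod_cast hm.not_gt)]

theorem degLE_sub_polyPart {x : Kinf F} {d : ℕ} (hx : DegLE (d - 1) x) :
    DegLE (-1) (x - polyK F (polyPart d x)) := by
  refine degLE_iff_coeff.2 fun k hk => ?_
  rw [HahnSeries.coeff_sub]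
  rcases le_or_gt k 0 with h0 | h0
  · obtain ⟨m, rfl⟩ : ∃ m : ℕ, k = -m := ⟨(-k).toNat, by omega⟩
    rw [polyK_coeff_neg_natCast, polyPart_coeff]
    split_ifs with hm
    · exact sub_self _
    · rw [sub_zero]; exact degLE_iff_coeff.1 hx _ (by omega)
  · rw [polyK_coeff_of_pos _ h0, sub_zero]
    exact degLE_iff_coeff.1 hx _ (by omega)

end Theta

section Gauss

variable {F : Type} [Field F]

/-- `GaussDegLE e f` encodes the Gauss-norm bound `‖f‖ ≤ q ^ e`. -/
def GaussDegLE (e : ℤ) (f : TS F) : Prop := ∀ i, DegLE e (coeffT F i f)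

@[simp] theorem coeffT_add (i : ℕ) (f g : TS F) :
    coeffT F i (f + g) = coeffT F i f + coeffT F i g := map_add _ f g

@[simp] theorem coeffT_neg (i : ℕ) (f : TS F) : coeffT F i (-f) = -coeffT F i f := map_neg _ f

@[simp] theorem coeffT_sub (i : ℕ) (f g : TS F) :
    coeffT F i (f - g) = coeffT F i f - coeffT F i g := map_sub _ f g

theorem coeffT_mul (i : ℕ) (f g : TS F) :
    coeffT F i (f * g) =
      ∑ p ∈ Finset.HasAntidiagonal.antidiagonal i, coeffT F p.1 f * coeffT F p.2 g :=
  PowerSeries.coeff_mul i f g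

theorem coeffT_C (i : ℕ) (x : Kinf F) :
    coeffT F i (PowerSeries.C x) = if i = 0 then x else 0 :=
  PowerSeries.coeff_C i x

theorem GaussDegLE.mono {e e' : ℤ} (h : e ≤ e') {f : TS F} (hf : GaussDegLE e f) :
    GaussDegLE e' f :=
  fun i => (hf i).mono h

theorem gaussDegLE_C {e : ℤ} {x : Kinf F} (hx : DegLE e x) : GaussDegLE e (PowerSeries.C x) := by
  intro i
  rw [coeffT_C]
  split_ifs
  exacts [hx, degLE_zero e]

theorem gaussDegLE_one : GaussDegLE 0 (1 : TS F) := by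
  simpa using gaussDegLE_C (F := F) degLE_one

theorem gaussDegLE_tt : GaussDegLE 0 (tt F) := by
  intro i
  simp only [coeffT, tt, PowerSeries.coeff_X]
  split_ifs
  exacts [degLE_one, degLE_zero 0]

theorem GaussDegLE.add {e : ℤ} {f g : TS F} (hf : GaussDegLE e f) (hg : GaussDegLE e g) :
    GaussDegLE e (f + g) := fun i => by
  rw [coeffT_add]; exact (hf i).add (hg i)

theorem GaussDegLE.neg {e : ℤ} {f : TS F} (hf : GaussDegLE e f) : GaussDegLE e (-f) := fun i => by
  rw [coeffT_neg]; exact (hf i).neg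

theorem GaussDegLE.sub {e : ℤ} {f g : TS F} (hf : GaussDegLE e f) (hg : GaussDegLE e g) :
    GaussDegLE e (f - g) := fun i => by
  rw [coeffT_sub]; exact (hf i).sub (hg i)

theorem GaussDegLE.mul {a b : ℤ} {f g : TS F} (hf : GaussDegLE a f) (hg : GaussDegLE b g) :
    GaussDegLE (a + b) (f * g) := fun i => by
  rw [coeffT_mul]; exact degLE_sum fun p _ => (hf p.1).mul (hg p.2)

theorem GaussDegLE.mul_sub_one {f g : TS F} (hf : GaussDegLE (-1) (f - 1))
    (hg : GaussDegLE (-1) (g - 1)) : GaussDegLE (-1) (f * g - 1) := by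
  have hg0 : GaussDegLE 0 g := by
    simpa using (hg.mono (by omega)).add gaussDegLE_one
  rw [show f * g - 1 = (f - 1) * g + (g - 1) by ring]
  exact (by simpa using hf.mul hg0 : GaussDegLE (-1) ((f - 1) * g)).add hg

theorem gaussDegLE_prod_sub_one {ι : Type*} (s : Finset ι) {f : ι → TS F}
    (h : ∀ i ∈ s, GaussDegLE (-1) (f i - 1)) : GaussDegLE (-1) ((∏ i ∈ s, f i) - 1) := by
  classical
  induction s using Finset.induction_on with
  | empty => simpa using gaussDegLE_C (F := F) (degLE_zero (-1))
  | insert a s ha ih =>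
    rw [Finset.prod_insert ha]
    exact (h a (Finset.mem_insert_self a s)).mul_sub_one
      (ih fun i hi => h i (Finset.mem_insert_of_mem hi))

theorem GaussDegLE.pow_sub_one {f : TS F} (hf : GaussDegLE (-1) (f - 1)) (n : ℕ) :
    GaussDegLE (-1) (f ^ n - 1) := by
  simpa using gaussDegLE_prod_sub_one (Finset.range n) fun _ _ => hf

end Gauss

section Tate

variable {F : Type} [Field F] [Fintype F]

theorem gnorm_le_zpow_iff {e : ℤ} {f : TS F} :
    gnorm F f ≤ (Fintype.card F : ℝ≥0∞) ^ e ↔ GaussDegLE e f := by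
  simp only [gnorm, iSup_le_iff, kabs_le_zpow_iff (Fintype.one_lt_card (α := F)), GaussDegLE]

theorem gnorm_lt_one_iff {f : TS F} : gnorm F f < 1 ↔ GaussDegLE (-1) f := by
  refine ⟨fun h i => (kabs_lt_one_iff (Fintype.one_lt_card (α := F))).1 ((le_iSup _ i).trans_lt h),
    fun h => (gnorm_le_zpow_iff.2 h).trans_lt ?_⟩
  rw [← zpow_zero (Fintype.card F : ℝ≥0∞), lt_iff_not_ge,
    natCast_zpow_le_zpow_iff (Fintype.one_lt_card (α := F))]
  omega

theorem isTate_iff {f : TS F} :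
    IsTate F f ↔ ∀ e : ℤ, ∀ᶠ i in atTop, DegLE e (coeffT F i f) := by
  rw [IsTate, tendsto_zero_iff_forall_zpow (Fintype.one_lt_card (α := F))]
  simp only [kabs_le_zpow_iff (Fintype.one_lt_card (α := F))]

theorem tt_iff {s : ℕ → TS F} {L : TS F} :
    TT F s L ↔ ∀ e : ℤ, ∀ᶠ N in atTop, GaussDegLE e (L - s N) := by
  rw [TT, tendsto_zero_iff_forall_zpow (Fintype.one_lt_card (α := F))]
  simp only [gnorm_le_zpow_iff]

theorem IsTate.exists_gaussDegLE {f : TS F} (hf : IsTate F f) :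
    ∃ B : ℤ, 0 ≤ B ∧ GaussDegLE B f := by
  obtain ⟨N, hN⟩ := eventually_atTop.1 (isTate_iff.1 hf 0)
  choose e he0 he using fun i => exists_degLE (coeffT F i f)
  refine ⟨∑ i ∈ Finset.range N, e i, Finset.sum_nonneg fun i _ => he0 i, fun i => ?_⟩
  rcases lt_or_ge i N with hi | hi
  · exact (he i).mono
      (Finset.single_le_sum (fun j _ => he0 j) (Finset.mem_range.2 hi))
  · exact (hN i hi).mono (Finset.sum_nonneg fun j _ => he0 j)

theorem IsTate.sub {f g : TS F} (hf : IsTate F f) (hg : IsTate F g) : IsTate F (f - g) :=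
  isTate_iff.2 fun e => ((isTate_iff.1 hf e).and (isTate_iff.1 hg e)).mono fun i h => by
    rw [coeffT_sub]; exact h.1.sub h.2

theorem IsTate.mul {f g : TS F} (hf : IsTate F f) (hg : IsTate F g) : IsTate F (f * g) := by
  obtain ⟨Bf, hBf0, hBf⟩ := hf.exists_gaussDegLE
  obtain ⟨Bg, hBg0, hBg⟩ := hg.exists_gaussDegLE
  refine isTate_iff.2 fun e => ?_
  obtain ⟨N₁, hN₁⟩ := eventually_atTop.1 (isTate_iff.1 hf (e - Bg))
  obtain ⟨N₂, hN₂⟩ := eventually_atTop.1 (isTate_iff.1 hg (e - Bf))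
  refine eventually_atTop.2 ⟨N₁ + N₂, fun i hi => ?_⟩
  rw [coeffT_mul]
  refine degLE_sum fun p hp => ?_
  rw [Finset.HasAntidiagonal.mem_antidiagonal] at hp
  rcases le_or_gt N₁ p.1 with h1 | h1
  · exact ((hN₁ _ h1).mul (hBg _)).mono (by omega)
  · exact ((hBf _).mul (hN₂ _ (by omega))).mono (by omega)

theorem isTate_of_eventually_coeffT_eq_zero {f : TS F} (h : ∀ᶠ i in atTop, coeffT F i f = 0) :
    IsTate F f :=
  isTate_iff.2 fun e => h.mono fun _ hi => hi ▸ degLE_zero e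

theorem isTate_C (x : Kinf F) : IsTate F (PowerSeries.C x) :=
  isTate_of_eventually_coeffT_eq_zero <| (eventually_gt_atTop 0).mono fun i hi => by
    rw [coeffT_C, if_neg hi.ne']

end Tate

section PolynomialPart

variable {F : Type} [Field F]

theorem polyT_eq_coe (R : Polynomial (Polynomial F)) :
    polyT F R = ((R.map (polyK F) : Polynomial (Kinf F)) : TS F) := by
  rw [polyT, Polynomial.coe_eval₂RingHom, ← Polynomial.eval₂_map,
    Polynomial.eval₂_C_X_eq_coe]

theorem coeffT_polyT (R : Polynomial (Polynomial F)) (i : ℕ) :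
    coeffT F i (polyT F R) = polyK F (R.coeff i) := by
  rw [coeffT, polyT_eq_coe, Polynomial.coeff_coe, Polynomial.coeff_map]

theorem isTate_polyT [Fintype F] (R : Polynomial (Polynomial F)) : IsTate F (polyT F R) :=
  isTate_of_eventually_coeffT_eq_zero <| (eventually_gt_atTop R.natDegree).mono fun i hi => by
    rw [coeffT_polyT, Polynomial.coeff_eq_zero_of_natDegree_lt hi, map_zero]

theorem gaussDegLE_polyT {R : Polynomial (Polynomial F)} {d : ℕ}
    (hR : ∀ i, (R.coeff i).degree < d) : GaussDegLE (d - 1) (polyT F R) := fun i => by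
  rw [coeffT_polyT]; exact degLE_polyK_of_degree_lt (hR i)

theorem eq_zero_of_gaussDegLE_polyT {R : Polynomial (Polynomial F)}
    (h : GaussDegLE (-1) (polyT F R)) : R = 0 :=
  Polynomial.ext fun i => by
    rw [Polynomial.coeff_zero]
    exact eq_zero_of_degLE_polyK (by simpa [coeffT_polyT] using h i)

/-- Splitting off the polynomial part of every coefficient: `K∞⟨t⟩ = 𝔽[θ,t] + 𝔪∞⟨t⟩`. -/
theorem IsTate.exists_sub_polyT_gaussDegLE [Fintype F] {f : TS F} (hf : IsTate F f) {d : ℕ}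
    (hb : GaussDegLE (d - 1) f) :
    ∃ R : Polynomial (Polynomial F), (∀ i, (R.coeff i).degree < d) ∧
      GaussDegLE (-1) (f - polyT F R) := by
  obtain ⟨N, hN⟩ := eventually_atTop.1 (isTate_iff.1 hf (-1))
  refine ⟨∑ i ∈ Finset.range N, Polynomial.monomial i (polyPart d (coeffT F i f)), fun i => ?_,
    fun i => ?_⟩
  · simp only [Polynomial.finsetSum_coeff, Polynomial.coeff_monomial, Finset.sum_ite_eq',
      Finset.mem_range]
    split_ifs
    exacts [degree_polyPart_lt d _, (Polynomial.degree_zero).trans_lt (WithBot.bot_lt_coe d)]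
  · simp only [coeffT_sub, coeffT_polyT, Polynomial.finsetSum_coeff, Polynomial.coeff_monomial,
      Finset.sum_ite_eq', Finset.mem_range]
    split_ifs with hi
    · exact degLE_sub_polyPart (hb i)
    · rw [map_zero, sub_zero]; exact hN i (by omega)

end PolynomialPart

section Inverse

variable {F : Type} [Field F]

theorem degLE_coeffT_sub_one_mul {s w : TS F} (hs0 : PowerSeries.constantCoeff s = 1) {e : ℤ}
    {i : ℕ} (h : ∀ p ∈ Finset.HasAntidiagonal.antidiagonal i, 0 < p.1 →
      DegLE e (coeffT F p.1 (s - 1) * coeffT F p.2 w)) :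
    DegLE e (coeffT F i ((s - 1) * w)) := by
  rw [coeffT_mul]
  refine degLE_sum fun p hp => ?_
  rcases Nat.eq_zero_or_pos p.1 with h0 | h0
  · have : coeffT F 0 (s - 1) = 0 := by simp [coeffT, hs0]
    rw [h0, this, zero_mul]
    exact degLE_zero e
  · exact h p hp h0

theorem inv_eq_one_sub_mul {s : TS F} (hs0 : PowerSeries.constantCoeff s = 1) :
    s⁻¹ = 1 - (s - 1) * s⁻¹ := by
  linear_combination PowerSeries.mul_inv_cancel s (by simp [hs0])

/-- Induction on the coefficients of `s⁻¹ = 1 - (s - 1) s⁻¹`, as `s - 1` has no constant term. -/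
theorem gaussDegLE_inv {s : TS F} (hs0 : PowerSeries.constantCoeff s = 1)
    (hs : GaussDegLE (-1) (s - 1)) : GaussDegLE 0 s⁻¹ := by
  intro i
  induction i using Nat.strong_induction_on with
  | _ i ih =>
    rw [inv_eq_one_sub_mul hs0, coeffT_sub]
    refine (gaussDegLE_one i).sub (degLE_coeffT_sub_one_mul hs0 fun p hp h0 => ?_)
    rw [Finset.HasAntidiagonal.mem_antidiagonal] at hp
    exact ((hs p.1).mul (ih p.2 (by omega))).mono (by omega)

theorem IsTate.inv [Fintype F] {s : TS F} (hs0 : PowerSeries.constantCoeff s = 1)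
    (hs : GaussDegLE (-1) (s - 1)) (hsT : IsTate F (s - 1)) : IsTate F s⁻¹ := by
  have decay : ∀ r : ℕ, ∀ᶠ i in atTop, DegLE (-r) (coeffT F i s⁻¹) := by
    intro r
    induction r with
    | zero => exact Eventually.of_forall fun i => by simpa using gaussDegLE_inv hs0 hs i
    | succ r ih =>
      obtain ⟨N₁, hN₁⟩ := eventually_atTop.1 ih
      obtain ⟨N₂, hN₂⟩ := eventually_atTop.1 (isTate_iff.1 hsT (-r - 1))
      refine eventually_atTop.2 ⟨N₁ + N₂ + 1, fun i hi => ?_⟩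
      rw [inv_eq_one_sub_mul hs0, coeffT_sub,
        show coeffT F i 1 = 0 by simp [coeffT, PowerSeries.coeff_one, show i ≠ 0 by omega]]
      refine (degLE_zero _).sub (degLE_coeffT_sub_one_mul hs0 fun p hp h0 => ?_)
      rw [Finset.HasAntidiagonal.mem_antidiagonal] at hp
      rcases le_or_gt N₂ p.1 with h2 | h2
      · exact ((hN₂ _ h2).mul (gaussDegLE_inv hs0 hs p.2)).mono (by push_cast; omega)
      · exact ((hs p.1).mul (hN₁ _ (by omega))).mono (by push_cast; omega)
  exact isTate_iff.2 fun e => (decay (-e).toNat).mono fun i hi => hi.mono (by omega)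

end Inverse

section Nu

variable {F : Type} [Field F] [Fintype F]

theorem gaussDegLE_prod_nuFactor_sub_one (n N : ℕ) :
    GaussDegLE (-1) ((∏ j ∈ Finset.range N,
      (1 - tt F * PowerSeries.C ((theta F)⁻¹ ^ Fintype.card F ^ j)) ^ n) - 1) := by
  refine gaussDegLE_prod_sub_one _ fun j _ => GaussDegLE.pow_sub_one ?_ n
  have hθ : DegLE (-1) ((theta F)⁻¹ ^ Fintype.card F ^ j) :=
    degLE_theta_inv_pow (Nat.one_le_iff_ne_zero.2 (pow_ne_zero _ Fintype.card_ne_zero))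
  simpa using (gaussDegLE_tt.mul (gaussDegLE_C hθ)).neg

theorem constantCoeff_nuPartial (n h N : ℕ) :
    PowerSeries.constantCoeff (nuPartial F n h N) = (-theta F)⁻¹ ^ h := by
  simp [nuPartial, tt]

variable {n h : ℕ} {ν : TS F}

omit [Fintype F] in
theorem neg_theta_pow_ne_zero : (-theta F) ^ h ≠ 0 :=
  pow_ne_zero _ (neg_ne_zero.2 (HahnSeries.single_ne_zero one_ne_zero))

theorem constantCoeff_C_mul_nu (hνc : TT F (nuPartial F n h) ν) :
    PowerSeries.constantCoeff (PowerSeries.C ((-theta F) ^ h) * ν) = 1 := by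
  have hlim : PowerSeries.constantCoeff ν = (-theta F)⁻¹ ^ h := by
    refine sub_eq_zero.1 (eq_zero_of_forall_degLE fun e => ?_)
    obtain ⟨N, hN⟩ := (tt_iff.1 hνc e).exists
    simpa [coeffT, constantCoeff_nuPartial] using hN 0
  rw [map_mul, PowerSeries.constantCoeff_C, hlim, inv_pow, mul_inv_cancel₀ neg_theta_pow_ne_zero]

theorem gaussDegLE_C_mul_nu_sub_one (hνc : TT F (nuPartial F n h) ν) :
    GaussDegLE (-1) (PowerSeries.C ((-theta F) ^ h) * ν - 1) := by
  obtain ⟨N, hN⟩ := (tt_iff.1 hνc (-1 - h)).exists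
  have hc : PowerSeries.C ((-theta F) ^ h) * nuPartial F n h N = ∏ j ∈ Finset.range N,
      (1 - tt F * PowerSeries.C ((theta F)⁻¹ ^ Fintype.card F ^ j)) ^ n := by
    rw [nuPartial, ← mul_assoc, ← map_mul, inv_pow, mul_inv_cancel₀ neg_theta_pow_ne_zero,
      map_one, one_mul]
  have hsplit : PowerSeries.C ((-theta F) ^ h) * ν - 1 =
      PowerSeries.C ((-theta F) ^ h) * (ν - nuPartial F n h N) +
        (PowerSeries.C ((-theta F) ^ h) * nuPartial F n h N - 1) := by ring
  rw [hsplit, hc]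
  exact (((gaussDegLE_C (degLE_neg_theta_pow h)).mul hN).mono (by omega)).add
    (gaussDegLE_prod_nuFactor_sub_one n N)

theorem exists_nu_mul_eq_one (hν : IsTate F ν) (hνc : TT F (nuPartial F n h) ν) :
    ∃ w : TS F, ν * w = 1 ∧ IsTate F w ∧ GaussDegLE h w ∧ GaussDegLE (-h) ν := by
  obtain ⟨s, rfl⟩ : ∃ s, ν = PowerSeries.C ((-theta F)⁻¹ ^ h) * s :=
    ⟨PowerSeries.C ((-theta F) ^ h) * ν, by
      rw [← mul_assoc, ← map_mul, inv_pow, inv_mul_cancel₀ neg_theta_pow_ne_zero, map_one,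
        one_mul]⟩
  have hca : PowerSeries.C ((-theta F) ^ h) * PowerSeries.C ((-theta F)⁻¹ ^ h) = 1 := by
    rw [← map_mul, inv_pow, mul_inv_cancel₀ neg_theta_pow_ne_zero, map_one]
  have hcs : PowerSeries.C ((-theta F) ^ h) * (PowerSeries.C ((-theta F)⁻¹ ^ h) * s) = s := by
    linear_combination s * hca
  have hs0 := constantCoeff_C_mul_nu hνc
  have hs := gaussDegLE_C_mul_nu_sub_one hνc
  rw [hcs] at hs0 hs
  have hsT : IsTate F (s - 1) := by
    have := ((isTate_C ((-theta F) ^ h)).mul hν).sub (isTate_C (F := F) 1)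
    rwa [hcs, map_one] at this
  refine ⟨s⁻¹ * PowerSeries.C ((-theta F) ^ h), ?_, (hsT.inv hs0 hs).mul (isTate_C _), ?_, ?_⟩
  · linear_combination (s * s⁻¹) * hca + PowerSeries.mul_inv_cancel s (by simp [hs0])
  · simpa using (gaussDegLE_inv hs0 hs).mul (gaussDegLE_C (degLE_neg_theta_pow h))
  · simpa using (gaussDegLE_C (degLE_neg_theta_inv_pow h)).mul
      ((hs.mono (by omega)).add gaussDegLE_one)

end Nu

section Decomposition

variable {F : Type} [Field F] [Fintype F] {ν w : TS F}

omit [Fintype F] in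
theorem polyDegLt_subset_polyTT (d : ℕ) : PolyDegLt F d ⊆ PolyTT F :=
  fun _ ⟨R, _, hR⟩ => ⟨R, hR.symm⟩

/-- Decomposing `f ν⁻¹ = P + g` with `P ∈ 𝔽[θ,t]` and `g ∈ 𝔪∞⟨t⟩` gives `f = P ν + g ν`. -/
theorem exists_mem_polyDegLt_mul_add_mul (hνw : ν * w = 1) (hw : IsTate F w) {f : TS F}
    (hf : IsTate F f) {d : ℕ} (hb : GaussDegLE (d - 1) (f * w)) :
    ∃ P ∈ PolyDegLt F d, ∃ g : TS F, IsTate F g ∧ gnorm F g < 1 ∧ f = P * ν + g * ν := by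
  obtain ⟨R, hRd, hR⟩ := (hf.mul hw).exists_sub_polyT_gaussDegLE hb
  refine ⟨polyT F R, ⟨R, hRd, rfl⟩, f * w - polyT F R, (hf.mul hw).sub (isTate_polyT R),
    gnorm_lt_one_iff.2 hR, ?_⟩
  linear_combination (-f) * hνw

theorem eq_and_eq_of_mul_add_mul_eq (hν : ν ≠ 0) {P P' g g' : TS F} (hP : P ∈ PolyTT F)
    (hP' : P' ∈ PolyTT F) (hg : gnorm F g < 1) (hg' : gnorm F g' < 1)
    (h : P * ν + g * ν = P' * ν + g' * ν) : P = P' ∧ g = g' := by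
  obtain ⟨R, rfl⟩ := hP
  obtain ⟨R', rfl⟩ := hP'
  have hcan : polyT F R + g = polyT F R' + g' := mul_right_cancel₀ hν (by linear_combination h)
  have hRR' : R - R' = 0 := by
    refine eq_zero_of_gaussDegLE_polyT ?_
    rw [map_sub, show polyT F R - polyT F R' = g' - g by linear_combination hcan]
    exact (gnorm_lt_one_iff.1 hg').sub (gnorm_lt_one_iff.1 hg)
  rw [sub_eq_zero.1 hRR'] at hcan ⊢
  exact ⟨rfl, add_left_cancel hcan⟩

end Decomposition

theorem statement4 (n h : ℕ)
    (ν : TS F) (hν : IsTate F ν) (hνc : TT F (nuPartial F n h) ν) :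
    -- `K∞⟨t⟩ = 𝔽[θ,t]·ν_n ⊕ 𝔪_∞⟨t⟩·ν_n`
    ((∀ f : TS F, IsTate F f →
        ∃ P ∈ PolyTT F, ∃ g : TS F, IsTate F g ∧ gnorm F g < 1 ∧ f = P * ν + g * ν) ∧
     (∀ P ∈ PolyTT F, ∀ P' ∈ PolyTT F,
        ∀ g g' : TS F, IsTate F g → gnorm F g < 1 → IsTate F g' → gnorm F g' < 1 →
          P * ν + g * ν = P' * ν + g' * ν → P = P' ∧ g = g')) ∧
    -- `𝔽[θ,t]_{deg_θ<h}·ν_n ⊆ 𝔪_∞⟨t⟩`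
    (∀ P ∈ PolyDegLt F h, IsTate F (P * ν) ∧ gnorm F (P * ν) < 1) ∧
    -- `𝔪_∞⟨t⟩ = 𝔽[θ,t]_{deg_θ<h}·ν_n ⊕ 𝔪_∞⟨t⟩·ν_n`
    ((∀ f : TS F, IsTate F f → gnorm F f < 1 →
        ∃ P ∈ PolyDegLt F h, ∃ g : TS F, IsTate F g ∧ gnorm F g < 1 ∧ f = P * ν + g * ν) ∧
     (∀ P ∈ PolyDegLt F h, ∀ P' ∈ PolyDegLt F h,
        ∀ g g' : TS F, IsTate F g → gnorm F g < 1 → IsTate F g' → gnorm F g' < 1 →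
          P * ν + g * ν = P' * ν + g' * ν → P = P' ∧ g = g')) := by
  obtain ⟨w, hνw, hw, hwh, hνh⟩ := exists_nu_mul_eq_one hν hνc
  have hν0 : ν ≠ 0 := left_ne_zero_of_mul_eq_one hνw
  refine ⟨⟨fun f hf => ?_, fun P hP P' hP' g g' _ hg _ hg' =>
      eq_and_eq_of_mul_add_mul_eq hν0 hP hP' hg hg'⟩,
    fun P hP => ?_,
    fun f hf hf1 => exists_mem_polyDegLt_mul_add_mul hνw hw hf
      (((gnorm_lt_one_iff.1 hf1).mul hwh).mono (by omega)),
    fun P hP P' hP' g g' _ hg _ hg' => eq_and_eq_of_mul_add_mul_eq hν0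
      (polyDegLt_subset_polyTT h hP) (polyDegLt_subset_polyTT h hP') hg hg'⟩
  · obtain ⟨B, -, hB⟩ := (hf.mul hw).exists_gaussDegLE
    obtain ⟨P, hP, hdecomp⟩ :=
      exists_mem_polyDegLt_mul_add_mul hνw hw hf (d := B.toNat + 1) (hB.mono (by omega))
    exact ⟨P, polyDegLt_subset_polyTT _ hP, hdecomp⟩
  · obtain ⟨R, hRd, rfl⟩ := hP
    exact ⟨(isTate_polyT R).mul hν,
      gnorm_lt_one_iff.2 (((gaussDegLE_polyT hRd).mul hνh).mono (by omega))⟩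

end Carlitz
end
end

section
/- Let n ≥ 1 be an integer with (q−1) | n. Let (α_1, …, α_n) be an 𝔽-basis of {α ∈ 𝔽[θ] : deg_θ α < n}, and let a_0, a_1, …, a_n ∈ 𝔽[t] be a relatively prime family (gcd(a_0, …, a_n) = 1) such that a_0·ω_n + a_1·ξ_{α_1} + ⋯ + a_n·ξ_{α_n} ∈ 𝔽[θ,t]. Then e := ∑_{i=1}^n a_i·α_i ∈ 𝔽[θ,t]_{deg_θ<n} generates ker φ; that is, {e' ∈ 𝔽[θ,t]_{deg_θ<n} : ξ_{e'} ∈ 𝔽[θ,t] + 𝔽[t]·ω_n} = 𝔽[t]·e. -/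
open scoped Classical ENNReal
open Filter

noncomputable section

namespace Carlitz

variable (F : Type) [Field F] [Fintype F]

/-! For `g` of `θ`-degree `< n` every term of the series `ξ_g` has Gauss norm `≤ q⁻¹`, whereas
nonzero elements of `𝔽[θ,t]` have norm `≥ 1`; so `ξ_g ∈ 𝔽[θ,t]` forces `ξ_g = 0`, and then `g = 0`
because the partial sums satisfy `g = (t - θ)ⁿ S_{N+1} - S_N⁽¹⁾ → 0`. Since `ξ` is `𝔽[t]`-linear,
if `ξ_{gᵢ} ∈ 𝔽[θ,t] + bᵢ ω` for `i = 1, 2`, then `ξ` of `b₂ g₁ - b₁ g₂` lies in `𝔽[θ,t]`, so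
`b₂ g₁ = b₁ g₂`. Here `ξ_e ∈ 𝔽[θ,t] - a₀ ω` with `a₀ ≠ 0` (otherwise `e = 0` and all `aᵢ` vanish),
and for `e' = ∑ cᵢ αᵢ` in the kernel this gives `a₀ cᵢ = -b aᵢ`; as the `aᵢ` are coprime, `a₀ ∣ b`
and `e' ∈ 𝔽[t] e`. -/

theorem _root_.PowerSeries.map_inv {k k' : Type*} [Field k] [Field k'] (φ : k →+* k')
    (f : PowerSeries k) : PowerSeries.map φ f⁻¹ = (PowerSeries.map φ f)⁻¹ := by
  have hmap : PowerSeries.constantCoeff (PowerSeries.map φ f) = φ (PowerSeries.constantCoeff f) :=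
    MvPowerSeries.constantCoeff_map φ f
  by_cases h : PowerSeries.constantCoeff f = 0
  · have h' : PowerSeries.constantCoeff (PowerSeries.map φ f) = 0 := by rw [hmap, h, map_zero]
    rw [PowerSeries.inv_eq_zero.mpr h, PowerSeries.inv_eq_zero.mpr h', map_zero]
  · have h' : PowerSeries.constantCoeff (PowerSeries.map φ f) ≠ 0 := by
      rwa [hmap, map_ne_zero]
    rw [eq_comm, PowerSeries.inv_eq_iff_mul_eq_one h', ← map_mul, PowerSeries.inv_mul_cancel _ h,
      map_one]

theorem exists_eq_mul_succ_of_gcd_eq_one {R : Type*} [CommMonoidWithZero R]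
    [StrongNormalizedGCDMonoid R] {n : ℕ} {a : Fin (n + 1) → R} (hgcd : Finset.univ.gcd a = 1)
    (ha : a 0 ≠ 0) {b : R} {c : Fin n → R} (h : ∀ i, a 0 * c i = b * a i.succ) :
    ∃ d, ∀ i, c i = d * a i.succ := by
  have hdvd : a 0 ∣ Finset.univ.gcd fun j => b * a j := by
    refine Finset.dvd_gcd fun j _ => ?_
    induction j using Fin.cases with
    | zero => exact dvd_mul_left _ _
    | succ i => exact ⟨c i, (h i).symm⟩
  rw [Finset.gcd_mul_left, hgcd, mul_one, dvd_normalize_iff] at hdvd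
  obtain ⟨d, rfl⟩ := hdvd
  exact ⟨d, fun i => mul_left_cancel₀ ha (by rw [h i, mul_assoc])⟩

local notation "𝔮" => (Fintype.card F : ℝ≥0∞)

theorem one_lt_card : 1 < 𝔮 := by
  exact_mod_cast Fintype.one_lt_card

theorem card_ne_zero : 𝔮 ≠ 0 :=
  (zero_lt_one.trans (one_lt_card F)).ne'

theorem inv_card_lt_one : 𝔮⁻¹ < 1 :=
  ENNReal.inv_lt_one.mpr (one_lt_card F)

section AbsoluteValue

variable {F}

theorem Kabs_of_ne_zero {x : Kinf F} (hx : x ≠ 0) :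
    Kabs (Fintype.card F) x = 𝔮 ^ (-x.order) :=
  if_neg hx

@[simp]
theorem Kabs_zero : Kabs (Fintype.card F) (0 : Kinf F) = 0 :=
  if_pos rfl

theorem Kabs_eq_zero {x : Kinf F} : Kabs (Fintype.card F) x = 0 ↔ x = 0 := by
  refine ⟨fun h => ?_, fun h => h ▸ Kabs_zero⟩
  by_contra hx
  rw [Kabs_of_ne_zero hx] at h
  exact (ENNReal.zpow_pos (card_ne_zero F) (ENNReal.natCast_ne_top _) _).ne' h

theorem Kabs_ne_top (x : Kinf F) : Kabs (Fintype.card F) x ≠ ⊤ := by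
  by_cases hx : x = 0
  · simp [hx]
  · rw [Kabs_of_ne_zero hx]
    exact ENNReal.zpow_ne_top (card_ne_zero F) (ENNReal.natCast_ne_top _) _

theorem Kabs_neg (x : Kinf F) : Kabs (Fintype.card F) (-x) = Kabs (Fintype.card F) x := by
  by_cases hx : x = 0
  · simp [hx]
  · rw [Kabs_of_ne_zero (neg_ne_zero.mpr hx), Kabs_of_ne_zero hx, HahnSeries.order_neg]

theorem Kabs_add_le (x y : Kinf F) :
    Kabs (Fintype.card F) (x + y) ≤ max (Kabs (Fintype.card F) x) (Kabs (Fintype.card F) y) := by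
  by_cases hxy : x + y = 0
  · simp [hxy]
  by_cases hx : x = 0
  · simp [hx]
  by_cases hy : y = 0
  · simp [hy]
  have hmin := HahnSeries.min_order_le_order_add hxy
  rw [Kabs_of_ne_zero hxy, Kabs_of_ne_zero hx, Kabs_of_ne_zero hy]
  rcases le_total x.order y.order with h | h
  · exact le_max_of_le_left (ENNReal.zpow_le_of_le (one_lt_card F).le (by omega))
  · exact le_max_of_le_right (ENNReal.zpow_le_of_le (one_lt_card F).le (by omega))

theorem Kabs_sum_le {ι : Type*} {s : Finset ι} {x : ι → Kinf F} {B : ℝ≥0∞}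
    (h : ∀ i ∈ s, Kabs (Fintype.card F) (x i) ≤ B) : Kabs (Fintype.card F) (∑ i ∈ s, x i) ≤ B :=
  Finset.sum_induction x (fun y => Kabs (Fintype.card F) y ≤ B)
    (fun _ _ hy hz => (Kabs_add_le _ _).trans (max_le hy hz)) (by simp) h

theorem Kabs_mul (x y : Kinf F) :
    Kabs (Fintype.card F) (x * y) = Kabs (Fintype.card F) x * Kabs (Fintype.card F) y := by
  by_cases hx : x = 0
  · simp [hx]
  by_cases hy : y = 0
  · simp [hy]
  rw [Kabs_of_ne_zero (mul_ne_zero hx hy), Kabs_of_ne_zero hx, Kabs_of_ne_zero hy,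
    HahnSeries.order_mul hx hy, neg_add,
    ENNReal.zpow_add (card_ne_zero F) (ENNReal.natCast_ne_top _)]

theorem Kabs_single {a : ℤ} {r : F} (hr : r ≠ 0) :
    Kabs (Fintype.card F) (HahnSeries.single a r) = 𝔮 ^ (-a) := by
  rw [Kabs_of_ne_zero (HahnSeries.single_ne_zero hr), HahnSeries.order_single hr]

theorem Kabs_one : Kabs (Fintype.card F) (1 : Kinf F) = 1 := by
  rw [← HahnSeries.single_zero_one, Kabs_single one_ne_zero, neg_zero, zpow_zero]

theorem Kabs_pow (x : Kinf F) (j : ℕ) :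
    Kabs (Fintype.card F) (x ^ j) = Kabs (Fintype.card F) x ^ j :=
  map_pow (⟨⟨Kabs (Fintype.card F), Kabs_one⟩, Kabs_mul⟩ : Kinf F →* ℝ≥0∞) x j

theorem Kabs_C_le_one (r : F) : Kabs (Fintype.card F) (HahnSeries.C r : Kinf F) ≤ 1 := by
  by_cases hr : r = 0
  · simp [hr]
  · rw [HahnSeries.C_apply, Kabs_single hr, neg_zero, zpow_zero]

theorem Kabs_le_zpow_of_coeff_eq_zero {x : Kinf F} {m : ℤ} (h : ∀ j < -m, x.coeff j = 0) :
    Kabs (Fintype.card F) x ≤ 𝔮 ^ m := by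
  by_cases hx : x = 0
  · simp [hx]
  rw [Kabs_of_ne_zero hx]
  have := (HahnSeries.le_order_iff_forall hx).mpr h
  exact ENNReal.zpow_le_of_le (one_lt_card F).le (by omega)

theorem zpow_neg_le_Kabs {x : Kinf F} {j : ℤ} (h : x.coeff j ≠ 0) :
    𝔮 ^ (-j) ≤ Kabs (Fintype.card F) x := by
  have hx : x ≠ 0 := by rintro rfl; exact h rfl
  rw [Kabs_of_ne_zero hx]
  exact ENNReal.zpow_le_of_le (one_lt_card F).le
    (neg_le_neg (HahnSeries.order_le_of_coeff_ne_zero h))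

end AbsoluteValue

section GaussNorm

variable {F}

theorem le_gnorm (f : TS F) (i : ℕ) : Kabs (Fintype.card F) (coeffT F i f) ≤ gnorm F f :=
  le_iSup (fun j => Kabs (Fintype.card F) (coeffT F j f)) i

theorem gnorm_le_iff {f : TS F} {B : ℝ≥0∞} :
    gnorm F f ≤ B ↔ ∀ i, Kabs (Fintype.card F) (coeffT F i f) ≤ B :=
  iSup_le_iff

theorem gnorm_eq_zero {f : TS F} : gnorm F f = 0 ↔ f = 0 := by
  simp only [gnorm, ENNReal.iSup_eq_zero, Kabs_eq_zero, coeffT, PowerSeries.ext_iff, map_zero]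

theorem gnorm_neg (f : TS F) : gnorm F (-f) = gnorm F f := by
  simp only [gnorm, coeffT, map_neg, Kabs_neg]

theorem gnorm_add_le (f g : TS F) : gnorm F (f + g) ≤ max (gnorm F f) (gnorm F g) :=
  gnorm_le_iff.mpr fun i => by
    simpa only [coeffT, map_add] using
      (Kabs_add_le _ _).trans (max_le_max (le_gnorm f i) (le_gnorm g i))

theorem gnorm_sub_le (f g : TS F) : gnorm F (f - g) ≤ max (gnorm F f) (gnorm F g) := by
  simpa only [sub_eq_add_neg, gnorm_neg] using gnorm_add_le f (-g)

theorem gnorm_sum_le {ι : Type*} {s : Finset ι} {f : ι → TS F} {B : ℝ≥0∞}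
    (h : ∀ i ∈ s, gnorm F (f i) ≤ B) : gnorm F (∑ i ∈ s, f i) ≤ B :=
  Finset.sum_induction f (fun g => gnorm F g ≤ B)
    (fun _ _ hg hh => (gnorm_add_le _ _).trans (max_le hg hh)) (by simp [gnorm, coeffT]) h

theorem gnorm_mul_le (f g : TS F) : gnorm F (f * g) ≤ gnorm F f * gnorm F g :=
  gnorm_le_iff.mpr fun i => by
    rw [coeffT, PowerSeries.coeff_mul]
    refine Kabs_sum_le fun p _ => ?_
    rw [Kabs_mul]
    exact mul_le_mul' (le_gnorm f p.1) (le_gnorm g p.2)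

theorem gnorm_C (x : Kinf F) : gnorm F (PowerSeries.C x) = Kabs (Fintype.card F) x := by
  refine le_antisymm (gnorm_le_iff.mpr fun i => ?_)
    (by simpa [coeffT] using le_gnorm (PowerSeries.C x) 0)
  rw [coeffT, PowerSeries.coeff_C]
  split_ifs <;> simp

theorem gnorm_one : gnorm F 1 = 1 := by
  rw [← map_one PowerSeries.C, gnorm_C, Kabs_one]

theorem gnorm_pow_le (f : TS F) (j : ℕ) : gnorm F (f ^ j) ≤ gnorm F f ^ j := by
  induction j with
  | zero => simp [gnorm_one]
  | succ j ih => rw [pow_succ, pow_succ]; exact (gnorm_mul_le _ _).trans (mul_le_mul_left ih _)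

theorem gnorm_tt_le_one : gnorm F (tt F) ≤ 1 :=
  gnorm_le_iff.mpr fun i => by
    rw [coeffT, tt, PowerSeries.coeff_X]
    split_ifs <;> simp [Kabs_one]

end GaussNorm

section Twist

theorem add_pow_card (x y : Kinf F) :
    (x + y) ^ Fintype.card F = x ^ Fintype.card F + y ^ Fintype.card F := by
  obtain ⟨p, _⟩ := CharP.exists F
  have hp : Fact p.Prime := ⟨CharP.char_is_prime F p⟩
  have : CharP (Kinf F) p := charP_of_injective_ringHom (HahnSeries.C_injective (Γ := ℤ)) p
  obtain ⟨k, -, hk⟩ := FiniteField.card F p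
  rw [hk]
  exact add_pow_char_pow x y p k

def frobK : Kinf F →+* Kinf F where
  toFun x := x ^ Fintype.card F
  map_one' := one_pow _
  map_mul' x y := mul_pow x y _
  map_zero' := zero_pow Fintype.card_ne_zero
  map_add' := add_pow_card F

def twistHom : TS F →+* TS F := PowerSeries.map (frobK F)

variable {F}

theorem twist_eq_twistHom : twist F = twistHom F := by
  ext f i
  simp only [twist, twistHom, PowerSeries.coeff_mk, PowerSeries.coeff_map, coeffT]
  rfl

theorem twistIter_eq_twistHom_pow (k : ℕ) : twistIter F k = ⇑(twistHom F ^ k) := by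
  funext f
  rw [twistIter, twist_eq_twistHom, RingHom.coe_pow]

theorem twistIter_succ (k : ℕ) (f : TS F) : twistIter F (k + 1) f = twist F (twistIter F k f) :=
  Function.iterate_succ_apply' _ _ _

theorem twistHom_inv (f : TS F) : twistHom F f⁻¹ = (twistHom F f)⁻¹ :=
  PowerSeries.map_inv _ f

theorem twistHom_comp_actT : (twistHom F).comp (actT F) = actT F := by
  refine Polynomial.ringHom_ext (fun r => ?_) ?_
  · simp [twistHom, actT, frobK, FiniteField.pow_card]
  · simp [twistHom, actT]

theorem twistIter_actT_mul (k : ℕ) (a : Polynomial F) (f : TS F) :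
    twistIter F k (actT F a * f) = actT F a * twistIter F k f := by
  rw [twistIter_eq_twistHom_pow, map_mul, RingHom.coe_pow,
    Function.iterate_fixed (RingHom.congr_fun twistHom_comp_actT a)]

theorem gnorm_twist_le (f : TS F) : gnorm F (twist F f) ≤ gnorm F f ^ Fintype.card F :=
  gnorm_le_iff.mpr fun i => by
    rw [show coeffT F i (twist F f) = coeffT F i f ^ Fintype.card F from PowerSeries.coeff_mk _ _,
      Kabs_pow]
    exact pow_le_pow_left' (le_gnorm f i) _

theorem gnorm_twistIter_le (f : TS F) (k : ℕ) :
    gnorm F (twistIter F k f) ≤ gnorm F f ^ Fintype.card F ^ k := by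
  induction k with
  | zero => simp [twistIter]
  | succ k ih =>
    rw [twistIter_succ, pow_succ, pow_mul]
    exact (gnorm_twist_le _).trans (pow_le_pow_left' ih _)

end Twist

section Polynomials

variable {k : Type} [Field k]

theorem theta_ne_zero : theta k ≠ 0 :=
  HahnSeries.single_ne_zero one_ne_zero

theorem polyK_monomial (j : ℕ) (c : k) :
    polyK k (Polynomial.monomial j c) = HahnSeries.single (-(j : ℤ)) c := by
  rw [polyK, Polynomial.coe_eval₂RingHom, Polynomial.eval₂_monomial, theta, HahnSeries.single_pow,
    HahnSeries.C_apply, HahnSeries.single_mul_single]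
  simp

theorem polyK_coeff (b : Polynomial k) (j : ℕ) : (polyK k b).coeff (-(j : ℤ)) = b.coeff j := by
  induction b using Polynomial.induction_on' with
  | add p q hp hq => rw [map_add, HahnSeries.coeff_add, hp, hq, Polynomial.coeff_add]
  | monomial i c =>
    rw [polyK_monomial, HahnSeries.coeff_single, Polynomial.coeff_monomial]
    simp [eq_comm]

theorem polyT_coeff (P : Polynomial (Polynomial k)) (j : ℕ) :
    coeffT k j (polyT k P) = polyK k (P.coeff j) := by
  induction P using Polynomial.induction_on' with
  | add p q hp hq => simp only [coeffT, map_add, Polynomial.coeff_add] at *; rw [hp, hq]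
  | monomial i b =>
    rw [polyT, Polynomial.coe_eval₂RingHom, Polynomial.eval₂_monomial, coeffT, RingHom.comp_apply,
      PowerSeries.coeff_C_mul_X_pow, Polynomial.coeff_monomial]
    split_ifs <;> simp_all [eq_comm]

theorem polyT_C (b : Polynomial k) : polyT k (Polynomial.C b) = PowerSeries.C (polyK k b) := by
  rw [polyT, Polynomial.coe_eval₂RingHom, Polynomial.eval₂_C, RingHom.comp_apply]

theorem polyT_injective : Function.Injective (polyT k) := by
  refine (injective_iff_map_eq_zero _).mpr fun P hP =>
    Polynomial.ext fun j => Polynomial.ext fun i => ?_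
  have := polyK_coeff (P.coeff j) i
  rw [← polyT_coeff, hP] at this
  simpa [coeffT] using this.symm

theorem actT_eq_polyT (a : Polynomial k) : actT k a = polyT k (a.map Polynomial.C) := by
  rw [← Polynomial.coe_mapRingHom, ← RingHom.comp_apply]
  congr 1
  refine Polynomial.ringHom_ext (fun r => ?_) ?_ <;> simp [actT, polyT, polyK]

theorem actT_mem_range (a : Polynomial k) : actT k a ∈ (polyT k).range :=
  ⟨_, (actT_eq_polyT a).symm⟩

variable {n : ℕ}

theorem zero_mem_PolyDegLt : (0 : TS k) ∈ PolyDegLt k n :=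
  ⟨0, by simp, (map_zero _).symm⟩

theorem add_mem_PolyDegLt {f g : TS k} (hf : f ∈ PolyDegLt k n) (hg : g ∈ PolyDegLt k n) :
    f + g ∈ PolyDegLt k n := by
  obtain ⟨P, hP, rfl⟩ := hf
  obtain ⟨Q, hQ, rfl⟩ := hg
  refine ⟨P + Q, fun i => ?_, (map_add _ _ _).symm⟩
  rw [Polynomial.coeff_add]
  exact (Polynomial.degree_add_le _ _).trans_lt (max_lt (hP i) (hQ i))

theorem actT_mul_mem_PolyDegLt (a : Polynomial k) {f : TS k} (hf : f ∈ PolyDegLt k n) :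
    actT k a * f ∈ PolyDegLt k n := by
  obtain ⟨P, hP, rfl⟩ := hf
  refine ⟨a.map Polynomial.C * P, fun i => ?_, by rw [map_mul, actT_eq_polyT]⟩
  rw [← Polynomial.mem_degreeLT, Polynomial.coeff_mul]
  refine Submodule.sum_mem _ fun p _ => ?_
  rw [Polynomial.coeff_map, ← Polynomial.smul_eq_C_mul]
  exact Submodule.smul_mem _ _ (Polynomial.mem_degreeLT.mpr (hP _))

theorem sum_mem_PolyDegLt {ι : Type*} {s : Finset ι} {f : ι → TS k}
    (h : ∀ i ∈ s, f i ∈ PolyDegLt k n) : ∑ i ∈ s, f i ∈ PolyDegLt k n :=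
  Finset.sum_induction f (· ∈ PolyDegLt k n) (fun _ _ => add_mem_PolyDegLt) zero_mem_PolyDegLt h

theorem C_polyK_mem_PolyDegLt {b : Polynomial k} (hb : b.degree < n) :
    PowerSeries.C (polyK k b) ∈ PolyDegLt k n := by
  refine ⟨Polynomial.C b, fun j => ?_, (polyT_C b).symm⟩
  rw [Polynomial.coeff_C]
  split_ifs
  · exact hb
  · simp

def basisComb (α : Fin n → Polynomial k) : (Fin n → Polynomial k) →+ TS k where
  toFun d := ∑ i, actT k (d i) * PowerSeries.C (polyK k (α i))
  map_zero' := by simp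
  map_add' d d' := by simp [add_mul, Finset.sum_add_distrib]

variable {α : Fin n → Polynomial k}

theorem basisComb_apply (d : Fin n → Polynomial k) :
    basisComb α d = ∑ i, actT k (d i) * PowerSeries.C (polyK k (α i)) :=
  rfl

theorem basisComb_smul (r : Polynomial k) (d : Fin n → Polynomial k) :
    basisComb α (r • d) = actT k r * basisComb α d := by
  simp [basisComb_apply, Finset.mul_sum, mul_assoc]

theorem basisComb_mem (hα : ∀ i, (α i).degree < n) (d : Fin n → Polynomial k) :
    basisComb α d ∈ PolyDegLt k n :=
  (basisComb_apply d).symm ▸ sum_mem_PolyDegLt fun i _ =>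
    actT_mul_mem_PolyDegLt _ (C_polyK_mem_PolyDegLt (hα i))

theorem basisComb_eq_polyT (d : Fin n → Polynomial k) :
    basisComb α d = polyT k (∑ i, (d i).map Polynomial.C * Polynomial.C (α i)) := by
  simp [basisComb_apply, actT_eq_polyT, polyT_C]

theorem basisComb_injective
    (hind : ∀ cf : Fin n → k, ∑ i, Polynomial.C (cf i) * α i = 0 → cf = 0) :
    Function.Injective (basisComb α) := by
  refine (injective_iff_map_eq_zero _).mpr fun d hd => funext fun i => Polynomial.ext fun j => ?_
  rw [basisComb_eq_polyT, ← map_zero (polyT k)] at hd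
  have hj := congrArg (Polynomial.coeff · j) (polyT_injective hd)
  simp only [Polynomial.finsetSum_coeff, Polynomial.coeff_mul_C, Polynomial.coeff_map,
    Polynomial.coeff_zero] at hj
  exact congrFun (hind _ hj) i

theorem exists_basisComb_eq_actT_mul
    (hind : ∀ cf : Fin n → k, ∑ i, Polynomial.C (cf i) * α i = 0 → cf = 0)
    {a : Fin (n + 1) → Polynomial k} (hgcd : Finset.univ.gcd a = 1) (ha : a 0 ≠ 0)
    {b : Polynomial k} {c : Fin n → Polynomial k}
    (h : actT k (a 0) * basisComb α c = actT k b * basisComb α fun i => a i.succ) :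
    ∃ d, basisComb α c = actT k d * basisComb α fun i => a i.succ := by
  rw [← basisComb_smul, ← basisComb_smul] at h
  obtain ⟨d, hd⟩ := exists_eq_mul_succ_of_gcd_eq_one hgcd ha fun i => by
    simpa using congrFun (basisComb_injective hind h) i
  exact ⟨d, by rw [← basisComb_smul]; congr 1; funext i; simp [hd i]⟩

theorem polyT_monomial_eq_basisComb (j : ℕ) (cf : Fin n → k) :
    polyT k (Polynomial.monomial j (∑ i, Polynomial.C (cf i) * α i))
      = basisComb α fun i => Polynomial.monomial j (cf i) := by
  simp only [basisComb_apply, polyT, actT, Polynomial.coe_eval₂RingHom, Polynomial.eval₂_monomial,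
    RingHom.comp_apply, map_sum, map_mul]
  refine Finset.sum_congr rfl fun i _ => ?_
  simp [polyK]
  ring

theorem exists_basisComb_eq
    (hspan : ∀ b : Polynomial k, b.degree < n →
      ∃ cf : Fin n → k, b = ∑ i, Polynomial.C (cf i) * α i)
    {f : TS k} (hf : f ∈ PolyDegLt k n) : ∃ d, f = basisComb α d := by
  obtain ⟨P, hP, rfl⟩ := hf
  choose cf hcf using fun j => hspan (P.coeff j) (hP j)
  refine ⟨∑ j ∈ Finset.range (P.natDegree + 1), fun i => Polynomial.monomial j (cf j i), ?_⟩
  conv_lhs => rw [P.as_sum_range' (P.natDegree + 1) (Nat.lt_succ_self _)]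
  simp only [map_sum]
  refine Finset.sum_congr rfl fun j _ => ?_
  rw [hcf j, polyT_monomial_eq_basisComb]

theorem inv_tt_sub_C {c : Kinf k} (hc : c ≠ 0) :
    (tt k - PowerSeries.C c)⁻¹ = PowerSeries.mk fun j => -c⁻¹ ^ (j + 1) := by
  rw [PowerSeries.inv_eq_iff_mul_eq_one (by simp [tt, hc])]
  refine PowerSeries.ext fun j => ?_
  rcases j with _ | j
  · simp [tt, mul_sub, hc]
  · simp [tt, mul_sub, PowerSeries.coeff_succ_mul_X]
    field_simp
    ring

end Polynomials

section Convergence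

variable {F}

theorem gnorm_actT_mul_le (a : Polynomial F) (f : TS F) : gnorm F (actT F a * f) ≤ gnorm F f := by
  have h : gnorm F (actT F a) ≤ 1 := gnorm_le_iff.mpr fun j => by
    rw [actT_eq_polyT, polyT_coeff, Polynomial.coeff_map, polyK, Polynomial.coe_eval₂RingHom,
      Polynomial.eval₂_C]
    exact Kabs_C_le_one _
  simpa using (gnorm_mul_le _ _).trans (mul_le_mul_left h _)

theorem TT_of_le {s : ℕ → TS F} {L : TS F} {u : ℕ → ℝ≥0∞} (hu : Tendsto u atTop (nhds 0))
    (h : ∀ N, gnorm F (L - s N) ≤ u N) : TT F s L :=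
  tendsto_of_tendsto_of_tendsto_of_le_of_le tendsto_const_nhds hu (fun _ => zero_le) h

theorem TT_unique {s : ℕ → TS F} {L₁ L₂ : TS F} (h₁ : TT F s L₁) (h₂ : TT F s L₂) : L₁ = L₂ := by
  have hle : ∀ N, gnorm F (L₁ - L₂) ≤ max (gnorm F (L₁ - s N)) (gnorm F (L₂ - s N)) := fun N => by
    simpa using gnorm_sub_le (L₁ - s N) (L₂ - s N)
  have h0 := ge_of_tendsto' (by simpa using h₁.max h₂) hle
  exact sub_eq_zero.mp (gnorm_eq_zero.mp (nonpos_iff_eq_zero.mp h0))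

theorem TT.add {s s' : ℕ → TS F} {L L' : TS F} (h : TT F s L) (h' : TT F s' L') :
    TT F (s + s') (L + L') :=
  TT_of_le (by simpa using h.max h') fun N => by
    simpa [add_sub_add_comm] using gnorm_add_le (L - s N) (L' - s' N)

theorem TT.actT_mul {s : ℕ → TS F} {L : TS F} (h : TT F s L) (a : Polynomial F) :
    TT F (fun N => actT F a * s N) (actT F a * L) :=
  TT_of_le h fun N => by simpa [mul_sub] using gnorm_actT_mul_le a (L - s N)

theorem gnorm_le_of_TT {s : ℕ → TS F} {L : TS F} {B : ℝ≥0∞} (h : TT F s L)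
    (hs : ∀ N, gnorm F (s N) ≤ B) (hB : B ≠ 0) : gnorm F L ≤ B := by
  obtain ⟨N, hN⟩ := (ENNReal.tendsto_nhds_zero.mp h B (pos_iff_ne_zero.mpr hB)).exists
  simpa using (gnorm_add_le (L - s N) (s N)).trans (max_le hN (hs N))

end Convergence

section Xi

variable {F} {n : ℕ}

theorem xiPartial_add (f g : TS F) :
    xiPartial F n (f + g) = xiPartial F n f + xiPartial F n g := by
  funext N
  simp [xiPartial, twistIter_eq_twistHom_pow, add_mul, Finset.sum_add_distrib]

theorem xiPartial_actT_mul (a : Polynomial F) (f : TS F) :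
    xiPartial F n (actT F a * f) = fun N => actT F a * xiPartial F n f N := by
  funext N
  simp [xiPartial, twistIter_actT_mul, Finset.mul_sum, mul_assoc]

variable (F) in
def IsXiMap (n : ℕ) (xi : TS F → TS F) : Prop :=
  ∀ g ∈ PolyDegLt F n, TT F (xiPartial F n g) (xi g)

variable {xi : TS F → TS F}

theorem xi_add (hxi : IsXiMap F n xi) {f g : TS F} (hf : f ∈ PolyDegLt F n)
    (hg : g ∈ PolyDegLt F n) :
    xi (f + g) = xi f + xi g :=
  TT_unique (hxi _ (add_mem_PolyDegLt hf hg)) (xiPartial_add f g ▸ (hxi f hf).add (hxi g hg))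

theorem xi_actT_mul (hxi : IsXiMap F n xi) (a : Polynomial F) {f : TS F} (hf : f ∈ PolyDegLt F n) :
    xi (actT F a * f) = actT F a * xi f :=
  TT_unique (hxi _ (actT_mul_mem_PolyDegLt a hf)) (xiPartial_actT_mul a f ▸ (hxi f hf).actT_mul a)

theorem xi_sum (hxi : IsXiMap F n xi) {ι : Type*} (s : Finset ι) (d : ι → Polynomial F)
    {g : ι → TS F}
    (hg : ∀ i ∈ s, g i ∈ PolyDegLt F n) :
    xi (∑ i ∈ s, actT F (d i) * g i) = ∑ i ∈ s, actT F (d i) * xi (g i) := by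
  classical
  induction s using Finset.induction_on with
  | empty =>
    simpa using xi_actT_mul hxi 0 zero_mem_PolyDegLt
  | insert j s hj ih =>
    have hs : ∀ i ∈ s, g i ∈ PolyDegLt F n := fun i hi => hg i (Finset.mem_insert_of_mem hi)
    rw [Finset.sum_insert hj, Finset.sum_insert hj,
      xi_add hxi (actT_mul_mem_PolyDegLt _ (hg j (Finset.mem_insert_self j s)))
        (sum_mem_PolyDegLt fun i hi => actT_mul_mem_PolyDegLt _ (hs i hi)),
      xi_actT_mul hxi _ (hg j (Finset.mem_insert_self j s)), ih hs]

end Xi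

section Injectivity

variable {F} {n : ℕ}

variable (F) in
def denomFactor (n i : ℕ) : TS F :=
  (tt F - PowerSeries.C (theta F ^ Fintype.card F ^ i)) ^ n

theorem xiPartial_eq_sum (n : ℕ) (e : TS F) (N : ℕ) :
    xiPartial F n e N = ∑ k ∈ Finset.range N,
      twistIter F k e * (∏ i ∈ Finset.range (k + 1), denomFactor F n i)⁻¹ :=
  rfl

theorem constantCoeff_denomFactor_ne_zero (n i : ℕ) :
    PowerSeries.constantCoeff (denomFactor F n i) ≠ 0 := by
  simp [denomFactor, tt, theta_ne_zero]

theorem twistHom_denomFactor (n i : ℕ) :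
    twistHom F (denomFactor F n i) = denomFactor F n (i + 1) := by
  simp [denomFactor, twistHom, tt, frobK, ← pow_mul, pow_succ']

theorem denomFactor_zero_mul_inv_prod (n k : ℕ) :
    denomFactor F n 0 * (∏ i ∈ Finset.range (k + 1), denomFactor F n i)⁻¹
      = (∏ i ∈ Finset.range k, denomFactor F n (i + 1))⁻¹ := by
  rw [Finset.prod_range_succ', PowerSeries.mul_inv_rev, ← mul_assoc,
    PowerSeries.mul_inv_cancel _ (constantCoeff_denomFactor_ne_zero n 0), one_mul]

theorem denomFactor_zero_mul_xiPartial (e : TS F) (N : ℕ) :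
    denomFactor F n 0 * xiPartial F n e (N + 1) = e + twist F (xiPartial F n e N) := by
  rw [xiPartial_eq_sum, xiPartial_eq_sum, Finset.mul_sum, Finset.sum_range_succ', add_comm,
    twist_eq_twistHom, map_sum]
  congr 1
  · rw [mul_left_comm, denomFactor_zero_mul_inv_prod]
    simp [twistIter]
  · refine Finset.sum_congr rfl fun k _ => ?_
    rw [mul_left_comm, denomFactor_zero_mul_inv_prod, twistIter_succ, twist_eq_twistHom, map_mul,
      twistHom_inv, map_prod]
    simp only [twistHom_denomFactor]

theorem gnorm_inv_tt_sub_C_le {c : Kinf F} (hc : c ≠ 0) (h : Kabs (Fintype.card F) c⁻¹ ≤ 1) :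
    gnorm F (tt F - PowerSeries.C c)⁻¹ ≤ Kabs (Fintype.card F) c⁻¹ := by
  rw [inv_tt_sub_C hc]
  refine gnorm_le_iff.mpr fun j => ?_
  rw [coeffT, PowerSeries.coeff_mk, Kabs_neg, Kabs_pow]
  exact pow_le_of_le_one zero_le h (Nat.succ_ne_zero j)

theorem gnorm_inv_mul_le (f g : TS F) : gnorm F (f * g)⁻¹ ≤ gnorm F f⁻¹ * gnorm F g⁻¹ := by
  rw [PowerSeries.mul_inv_rev, mul_comm (gnorm F f⁻¹)]
  exact gnorm_mul_le _ _

theorem gnorm_inv_prod_le {ι : Type*} (s : Finset ι) (f : ι → TS F) :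
    gnorm F (∏ i ∈ s, f i)⁻¹ ≤ ∏ i ∈ s, gnorm F (f i)⁻¹ :=
  Finset.le_prod_of_submultiplicative (fun g => gnorm F g⁻¹) (by simp [gnorm_one])
    gnorm_inv_mul_le s f

theorem Kabs_inv_theta_pow (j : ℕ) : Kabs (Fintype.card F) (theta F ^ j)⁻¹ = 𝔮⁻¹ ^ j := by
  have h : theta F * HahnSeries.single 1 1 = 1 := by
    rw [theta, HahnSeries.single_mul_single]
    simp
  rw [← inv_pow, inv_eq_of_mul_eq_one_right h, Kabs_pow, Kabs_single one_ne_zero, zpow_neg_one]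

theorem gnorm_inv_denomFactor_le (n i : ℕ) :
    gnorm F (denomFactor F n i)⁻¹ ≤ 𝔮⁻¹ ^ (Fintype.card F ^ i * n) := by
  have hle : Kabs (Fintype.card F) (theta F ^ Fintype.card F ^ i)⁻¹ ≤ 1 := by
    rw [Kabs_inv_theta_pow]
    exact pow_le_one₀ zero_le (inv_card_lt_one F).le
  calc gnorm F (denomFactor F n i)⁻¹
      ≤ ∏ _j ∈ Finset.range n, gnorm F (tt F - PowerSeries.C (theta F ^ Fintype.card F ^ i))⁻¹ := by
        simpa [denomFactor] using gnorm_inv_prod_le (Finset.range n)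
          fun _ => tt F - PowerSeries.C (theta F ^ Fintype.card F ^ i)
    _ ≤ ∏ _j ∈ Finset.range n, Kabs (Fintype.card F) (theta F ^ Fintype.card F ^ i)⁻¹ :=
        Finset.prod_le_prod' fun _ _ => gnorm_inv_tt_sub_C_le (pow_ne_zero _ theta_ne_zero) hle
    _ = 𝔮⁻¹ ^ (Fintype.card F ^ i * n) := by simp [Kabs_inv_theta_pow, pow_mul]

theorem gnorm_inv_prod_denomFactor_le (n k : ℕ) :
    gnorm F (∏ i ∈ Finset.range (k + 1), denomFactor F n i)⁻¹
      ≤ 𝔮⁻¹ ^ (Fintype.card F ^ k * n) := by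
  refine (gnorm_inv_prod_le _ _).trans ?_
  rw [Finset.prod_range_succ]
  refine (mul_le_mul' (Finset.prod_le_one' fun i _ => ?_) (gnorm_inv_denomFactor_le n k)).trans_eq
    (one_mul _)
  exact (gnorm_inv_denomFactor_le n i).trans (pow_le_one₀ zero_le (inv_card_lt_one F).le)

theorem gnorm_denomFactor_ne_top (n i : ℕ) : gnorm F (denomFactor F n i) ≠ ⊤ := by
  have h : gnorm F (tt F - PowerSeries.C (theta F ^ Fintype.card F ^ i)) < ⊤ :=
    (gnorm_sub_le _ _).trans_lt (max_lt (gnorm_tt_le_one.trans_lt ENNReal.one_lt_top)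
      (gnorm_C (F := F) _ ▸ (Kabs_ne_top _).lt_top))
  exact ((gnorm_pow_le _ n).trans_lt (ENNReal.pow_lt_top h)).ne

theorem Kabs_polyK_le {b : Polynomial F} (hb : b.degree < n) :
    Kabs (Fintype.card F) (polyK F b) ≤ 𝔮 ^ n * 𝔮⁻¹ := by
  have h : 𝔮 ^ n * 𝔮⁻¹ = 𝔮 ^ ((n : ℤ) - 1) := by
    rw [ENNReal.zpow_sub (card_ne_zero F) (ENNReal.natCast_ne_top _), zpow_natCast, zpow_one]
  rw [h]
  refine Kabs_le_zpow_of_coeff_eq_zero fun j hj => ?_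
  obtain ⟨i, rfl⟩ : ∃ i : ℕ, j = -i := ⟨(-j).toNat, by omega⟩
  rw [polyK_coeff]
  exact Polynomial.coeff_eq_zero_of_degree_lt (hb.trans_le (by exact_mod_cast (by omega : n ≤ i)))

theorem one_le_Kabs_polyK {b : Polynomial F} (hb : b ≠ 0) :
    1 ≤ Kabs (Fintype.card F) (polyK F b) := by
  have h := zpow_neg_le_Kabs (x := polyK F b) (j := -(b.natDegree : ℤ))
    (by rw [polyK_coeff]; exact Polynomial.leadingCoeff_ne_zero.mpr hb)
  rw [neg_neg, zpow_natCast] at h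
  exact (one_le_pow₀ (one_lt_card F).le).trans h

theorem gnorm_le_of_mem_PolyDegLt {g : TS F} (hg : g ∈ PolyDegLt F n) :
    gnorm F g ≤ 𝔮 ^ n * 𝔮⁻¹ := by
  obtain ⟨P, hP, rfl⟩ := hg
  exact gnorm_le_iff.mpr fun j => polyT_coeff P j ▸ Kabs_polyK_le (hP j)

theorem one_le_gnorm_of_mem_PolyTT {f : TS F} (hf : f ∈ PolyTT F) (hf0 : f ≠ 0) :
    1 ≤ gnorm F f := by
  obtain ⟨P, rfl⟩ := hf
  have hP : P ≠ 0 := by rintro rfl; exact hf0 (map_zero _)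
  exact (one_le_Kabs_polyK (Polynomial.leadingCoeff_ne_zero.mpr hP)).trans
    (polyT_coeff P _ ▸ le_gnorm _ _)

theorem gnorm_xiPartial_le {g : TS F} (hg : gnorm F g ≤ 𝔮 ^ n * 𝔮⁻¹) (N : ℕ) :
    gnorm F (xiPartial F n g N) ≤ 𝔮⁻¹ := by
  refine gnorm_sum_le fun k _ => ?_
  calc gnorm F (twistIter F k g * (∏ i ∈ Finset.range (k + 1), denomFactor F n i)⁻¹)
      ≤ (𝔮 ^ n * 𝔮⁻¹) ^ Fintype.card F ^ k * 𝔮⁻¹ ^ (Fintype.card F ^ k * n) :=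
        (gnorm_mul_le _ _).trans (mul_le_mul' ((gnorm_twistIter_le g k).trans
          (pow_le_pow_left' hg _)) (gnorm_inv_prod_denomFactor_le n k))
    _ = (𝔮 * 𝔮⁻¹) ^ (n * Fintype.card F ^ k) * 𝔮⁻¹ ^ Fintype.card F ^ k := by ring
    _ ≤ 𝔮⁻¹ := by
        rw [ENNReal.mul_inv_cancel (card_ne_zero F) (ENNReal.natCast_ne_top _), one_pow, one_mul]
        exact pow_le_of_le_one zero_le (inv_card_lt_one F).le (pow_ne_zero _ Fintype.card_ne_zero)

theorem eq_zero_of_TT_xiPartial_zero {g : TS F} (h : TT F (xiPartial F n g) 0) : g = 0 := by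
  have hs : Tendsto (fun N => gnorm F (xiPartial F n g N)) atTop (nhds 0) := by
    simpa [TT, gnorm_neg] using h
  have hle : ∀ N, gnorm F g ≤ max (gnorm F (denomFactor F n 0) * gnorm F (xiPartial F n g (N + 1)))
      (gnorm F (xiPartial F n g N) ^ Fintype.card F) := fun N => by
    have hg := eq_sub_of_add_eq (denomFactor_zero_mul_xiPartial (n := n) g N).symm
    calc gnorm F g = gnorm F (denomFactor F n 0 * xiPartial F n g (N + 1)
          - twist F (xiPartial F n g N)) := congrArg _ hg
      _ ≤ _ := (gnorm_sub_le _ _).trans (max_le_max (gnorm_mul_le _ _) (gnorm_twist_le _))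
  have hlim := (ENNReal.Tendsto.const_mul (hs.comp (tendsto_add_atTop_nat 1))
    (Or.inr (gnorm_denomFactor_ne_top (F := F) n 0))).max
      (ENNReal.Tendsto.pow (n := Fintype.card F) hs)
  rw [mul_zero, zero_pow Fintype.card_ne_zero, max_self] at hlim
  exact gnorm_eq_zero.mp (nonpos_iff_eq_zero.mp (ge_of_tendsto' hlim hle))

variable {xi : TS F → TS F}

theorem eq_zero_of_xi_mem_PolyTT (hxi : IsXiMap F n xi) {g : TS F} (hg : g ∈ PolyDegLt F n)
    (h : xi g ∈ PolyTT F) : g = 0 := by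
  have hsmall : gnorm F (xi g) ≤ 𝔮⁻¹ :=
    gnorm_le_of_TT (hxi g hg) (gnorm_xiPartial_le (gnorm_le_of_mem_PolyDegLt hg))
      (ENNReal.inv_ne_zero.mpr (ENNReal.natCast_ne_top _))
  have hxi0 : xi g = 0 := by
    by_contra h0
    exact (inv_card_lt_one F).not_ge ((one_le_gnorm_of_mem_PolyTT h h0).trans hsmall)
  exact eq_zero_of_TT_xiPartial_zero (hxi0 ▸ hxi g hg)

theorem actT_mul_eq_actT_mul_of_xi_eq (hxi : IsXiMap F n xi) {g₁ g₂ : TS F}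
    (hg₁ : g₁ ∈ PolyDegLt F n) (hg₂ : g₂ ∈ PolyDegLt F n) {ω P₁ P₂ : TS F}
    (hP₁ : P₁ ∈ PolyTT F) (hP₂ : P₂ ∈ PolyTT F) {b₁ b₂ : Polynomial F}
    (h₁ : xi g₁ = P₁ + actT F b₁ * ω) (h₂ : xi g₂ = P₂ + actT F b₂ * ω) :
    actT F b₂ * g₁ = actT F b₁ * g₂ := by
  have hg₁' := actT_mul_mem_PolyDegLt b₂ hg₁
  have hg₂' := actT_mul_mem_PolyDegLt (-b₁) hg₂
  have hpoly : xi (actT F b₂ * g₁ + actT F (-b₁) * g₂) ∈ PolyTT F := by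
    obtain ⟨R₁, rfl⟩ := hP₁
    obtain ⟨R₂, rfl⟩ := hP₂
    refine ⟨b₂.map Polynomial.C * R₁ - b₁.map Polynomial.C * R₂, ?_⟩
    rw [xi_add hxi hg₁' hg₂', xi_actT_mul hxi _ hg₁, xi_actT_mul hxi _ hg₂, h₁, h₂, map_sub,
      map_mul, map_mul, ← actT_eq_polyT, ← actT_eq_polyT, map_neg]
    ring
  have h := eq_zero_of_xi_mem_PolyTT hxi (add_mem_PolyDegLt hg₁' hg₂') hpoly
  rwa [map_neg, neg_mul, ← sub_eq_add_neg, sub_eq_zero] at h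

end Injectivity

theorem statement12 (n : ℕ)
    (ω : TS F)
    (xi : TS F → TS F)
    (hxi : ∀ e' ∈ PolyDegLt F n, IsTate F (xi e') ∧ TT F (xiPartial F n e') (xi e'))
    (α : Fin n → Polynomial F) (hα : ∀ i, (α i).degree < (n : ℕ))
    (hbasis : ∀ b : Polynomial F, b.degree < (n : ℕ) →
      ∃! cf : Fin n → F, b = ∑ i, Polynomial.C (cf i) * α i)
    (a : Fin (n + 1) → Polynomial F)
    (hcop : Finset.univ.gcd a = 1)
    (hrel : actT F (a 0) * ω
        + ∑ i : Fin n, actT F (a i.succ) * xi (PowerSeries.C (R := Kinf F) (polyK F (α i)))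
      ∈ PolyTT F)
    (e : TS F)
    (he : e = ∑ i : Fin n, actT F (a i.succ) * PowerSeries.C (R := Kinf F) (polyK F (α i))) :
    ∀ e' ∈ PolyDegLt F n,
      ((∃ P ∈ PolyTT F, ∃ b : Polynomial F, xi e' = P + actT F b * ω)
        ↔ ∃ cc : Polynomial F, e' = actT F cc * e) := by
  have hξ : IsXiMap F n xi := fun g hg => (hxi g hg).2
  have hind : ∀ cf : Fin n → F, ∑ i, Polynomial.C (cf i) * α i = 0 → cf = 0 := fun cf h =>
    (hbasis 0 (by simp)).unique h.symm (by simp)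
  replace he : e = basisComb α fun i : Fin n => a i.succ := he
  have he_mem : e ∈ PolyDegLt F n := he ▸ basisComb_mem hα _
  obtain ⟨R, hR⟩ := hrel
  have hξe : xi e = polyT F R + actT F (-a 0) * ω := by
    rw [hR, he, basisComb_apply, xi_sum hξ _ _ fun i _ => C_polyK_mem_PolyDegLt (hα i), map_neg]
    ring
  have ha0 : a 0 ≠ 0 := by
    intro h0
    have he0 : e = 0 := eq_zero_of_xi_mem_PolyTT hξ he_mem ⟨R, by simp [hξe, h0]⟩
    have hsucc := basisComb_injective hind (he.symm.trans (he0.trans (map_zero _).symm))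
    have ha : a = 0 := funext fun j => Fin.cases h0 (congrFun hsucc) j
    exact one_ne_zero (hcop.symm.trans (Finset.gcd_eq_zero_iff.mpr fun j _ => congrFun ha j))
  intro e' he'_mem
  constructor
  · rintro ⟨P, hP, b, hξe'⟩
    obtain ⟨c, rfl⟩ := exists_basisComb_eq (fun b hb => (hbasis b hb).exists) he'_mem
    have hdep := actT_mul_eq_actT_mul_of_xi_eq hξ he'_mem he_mem hP ⟨R, rfl⟩ hξe' hξe
    rw [he] at hdep ⊢
    exact exists_basisComb_eq_actT_mul hind hcop ha0 (b := -b)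
      (by rw [map_neg, neg_mul, ← hdep, map_neg, neg_mul, neg_neg])
  · rintro ⟨cc, rfl⟩
    refine ⟨actT F cc * polyT F R, mul_mem (actT_mem_range cc) ⟨R, rfl⟩, cc * -a 0, ?_⟩
    rw [xi_actT_mul hξ cc he_mem, hξe, map_mul]
    ring

end Carlitz
end
end
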